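/- Let f : 𝔻 → ℂ be holomorphic with f(0) = 1 and Re f > 0 on 𝔻, and suppose the Taylor coefficient a₁ = f'(0) satisfies |a₁| = 2. Then there exists θ ∈ ℝ such that f(z) = (1 + e^{iθ} z)/(1 - e^{iθ} z) for all z ∈ 𝔻. -/

import Mathlib

/-!
The Cayley transform `w ↦ (w - 1) / (w + 1)` maps the right half-plane into the unit disc, so
`g = (f - 1) / (f + 1)` is a self-map of the disc with `g 0 = 0` and `g'(0) = f'(0) / 2`.
Hence `|g'(0)| = 1`, and the equality case of the Schwarz lemma makes `g` a rotation
`z ↦ e^{iθ} z`; inverting the Cayley transform gives the formula for `f`.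
-/

open Complex Metric

namespace Complex

lemma norm_sub_one_lt_norm_add_one {w : ℂ} (hw : 0 < w.re) : ‖w - 1‖ < ‖w + 1‖ := by
  have hsq : ‖w - 1‖ ^ 2 < ‖w + 1‖ ^ 2 := by
    simp only [← normSq_eq_norm_sq, normSq_apply, sub_re, sub_im, add_re, add_im, one_re, one_im]
    nlinarith
  exact lt_of_pow_lt_pow_left₀ 2 (norm_nonneg _) hsq

lemma add_one_ne_zero_of_re_pos {w : ℂ} (hw : 0 < w.re) : w + 1 ≠ 0 := by
  intro h
  have hre : (w + 1).re = 0 := by rw [h, zero_re]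
  rw [add_re, one_re] at hre
  linarith

lemma norm_cayley_lt_one {w : ℂ} (hw : 0 < w.re) : ‖(w - 1) / (w + 1)‖ < 1 := by
  rw [norm_div, div_lt_one (norm_pos_iff.mpr (add_one_ne_zero_of_re_pos hw))]
  exact norm_sub_one_lt_norm_add_one hw

lemma eq_div_of_cayley_eq {w u : ℂ} (hw : w + 1 ≠ 0) (hu : 1 - u ≠ 0)
    (h : (w - 1) / (w + 1) = u) : w = (1 + u) / (1 - u) := by
  rw [div_eq_iff hw] at h
  rw [eq_div_iff hu]
  linear_combination h

lemma hasDerivAt_cayley_comp {f : ℂ → ℂ} {f' x : ℂ} (hf : HasDerivAt f f' x) (hx : f x = 1) :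
    HasDerivAt (fun z => (f z - 1) / (f z + 1)) (f' / 2) x :=
  ((hf.sub_const 1).fun_div (hf.add_const 1) (by rw [hx]; norm_num)).congr_deriv
    (by rw [hx]; ring)

lemma exists_eq_exp_mul_of_mapsTo_ball_of_norm_deriv_eq_one {g : ℂ → ℂ}
    (hg : DifferentiableOn ℂ g (ball 0 1)) (hmaps : Set.MapsTo g (ball 0 1) (ball 0 1))
    (h0 : g 0 = 0) (hd : ‖deriv g 0‖ = 1) :
    ∃ θ : ℝ, ∀ z ∈ ball (0 : ℂ) 1, g z = exp (θ * I) * z := by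
  obtain ⟨C, hC, hgC⟩ := affine_of_mapsTo_ball_of_exists_norm_dslope_eq_div' hg
    (by simpa only [h0] using hmaps.mono_right ball_subset_closedBall)
    ⟨0, mem_ball_self one_pos, by rw [dslope_same, hd, div_one]⟩
  rw [div_one] at hC
  refine ⟨arg C, fun z hz => ?_⟩
  have hexp : exp (arg C * I) = C := by
    simpa only [hC, ofReal_one, one_mul] using norm_mul_exp_arg_mul_I C
  rw [hexp, hgC hz, h0]
  simp only [sub_zero, smul_eq_mul, zero_add, mul_comm]

end Complex

theorem caratheodory_equality_case_a1 (f : ℂ → ℂ)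
    (hf : DifferentiableOn ℂ f (ball 0 1)) (h0 : f 0 = 1)
    (hre : ∀ z ∈ ball (0 : ℂ) 1, 0 < (f z).re)
    (ha1 : ‖deriv f 0‖ = 2) :
    ∃ θ : ℝ, ∀ z ∈ ball (0 : ℂ) 1,
      f z = (1 + Complex.exp (θ * Complex.I) * z) / (1 - Complex.exp (θ * Complex.I) * z) := by
  set g : ℂ → ℂ := fun z => (f z - 1) / (f z + 1)
  have hne : ∀ z ∈ ball (0 : ℂ) 1, f z + 1 ≠ 0 := fun z hz => add_one_ne_zero_of_re_pos (hre z hz)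
  have hg : DifferentiableOn ℂ g (ball 0 1) :=
    (hf.sub_const 1).div (hf.add_const 1) hne
  have hmaps : Set.MapsTo g (ball 0 1) (ball 0 1) := fun z hz => by
    simpa only [mem_ball, dist_zero_right] using norm_cayley_lt_one (hre z hz)
  have hg0 : g 0 = 0 := by simp [g, h0]
  have hderiv : deriv g 0 = deriv f 0 / 2 :=
    (hasDerivAt_cayley_comp (hf.differentiableAt (ball_mem_nhds 0 one_pos)).hasDerivAt h0).deriv
  obtain ⟨θ, hθ⟩ := exists_eq_exp_mul_of_mapsTo_ball_of_norm_deriv_eq_one hg hmaps hg0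
    (by rw [hderiv, norm_div, ha1]; norm_num)
  refine ⟨θ, fun z hz => eq_div_of_cayley_eq (hne z hz) ?_ (hθ z hz)⟩
  rw [sub_ne_zero, ← hθ z hz]
  exact fun h => (mem_ball_zero_iff.mp (hmaps hz)).ne (by rw [← h, norm_one])
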